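/- Let n ≥ 8 be divisible by 4 and d = n/2, and let H be a Hamiltonian cycle on the complete graph on ZMod n such that for every u ∈ ZMod n, H does not contain all three edges of any of the following configurations: (Type A) {u+d, u}, {u, u+1}, {u+1, u+1+d}; (Type B1) {u+1, u}, {u, u+d}, {u+d, u+1+d}; (Type B2) {u, u+1}, {u+1, u+1+d}, {u+1+d, u+d}. Then t_1 + 2·t_d ≤ n, where t_i is the number of edges of H of length i. -/

import Mathlib

/-!
Call an edge `{u, u + 1}` a rail at `u` and an edge `{u, u + d}` a rung at `u` (each rung is a
rung at both of its ends). Then `t₁` counts the vertices with a rail and `2 t_d` those with a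
rung, so the bound says that vertices with both are no more numerous than vertices with
neither. From a vertex `u` with both, walk up the ladder `u + j`, `u + j + d` while both rails
are present. The walk stops before `u + d`, by B1; A and B2 forbid a rung where it stops; and
of the two vertices there, one has neither rail nor rung. B1 also forbids another vertex with
both a rail and a rung along the walk, which makes this escape map injective.
-/

/-- The length of an edge of the complete graph on `ZMod n`:
`ℓ(i,j) = min(|i−j|, n−|i−j|)`, expressed as `min (i-j).val (j-i).val`. -/
def zLenSym {n : ℕ} : Sym2 (ZMod n) → ℕ :=
  Sym2.lift ⟨fun i j => min (i - j).val (j - i).val, fun i j => min_comm _ _⟩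

open Finset

theorem Finset.card_add_card_le_card_of_card_inter_le {α : Type*} [Fintype α] [DecidableEq α]
    {P Q : Finset α} (h : #(P ∩ Q) ≤ #(P ∪ Q)ᶜ) : #P + #Q ≤ Fintype.card α := by
  have := card_union_add_card_inter P Q
  have := card_add_card_compl (P ∪ Q)
  omega

namespace Sym2

variable {G : Type*} [AddCommGroup G] {a : G}

theorem mk_add_injective (ha : a + a ≠ 0) : Function.Injective fun u : G => s(u, u + a) := by
  intro u v h
  rcases Sym2.eq_iff.mp h with ⟨huv, -⟩ | ⟨rfl, hv⟩
  · exact huv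
  · exact absurd (by simpa [add_assoc] using hv) ha

theorem mk_add_eq_mk_add_iff (ha : a + a = 0) {u i : G} :
    s(u, u + a) = s(i, i + a) ↔ u = i ∨ u = i + a := by
  rw [Sym2.eq_iff]
  constructor
  · rintro (⟨rfl, -⟩ | ⟨rfl, -⟩) <;> simp
  · rintro (rfl | rfl)
    · simp
    · simp [add_assoc, ha]

theorem two_mul_card_image_mk_add [Fintype G] [DecidableEq G] (E : Finset (Sym2 G))
    (ha : a + a = 0) (ha0 : a ≠ 0) :
    2 * #((univ.filter fun u => s(u, u + a) ∈ E).image fun u => s(u, u + a)) =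
      #(univ.filter fun u => s(u, u + a) ∈ E) := by
  set S := univ.filter fun u => s(u, u + a) ∈ E
  rw [card_eq_sum_card_image (fun u => s(u, u + a)) S, sum_const_nat (m := 2), mul_comm]
  intro b hb
  obtain ⟨i, hi, rfl⟩ := mem_image.1 hb
  have hfiber : S.filter (fun u => s(u, u + a) = s(i, i + a)) = {i, i + a} := by
    ext u
    simp only [mem_filter, mem_insert, mem_singleton, ← mk_add_eq_mk_add_iff ha]
    refine ⟨And.right, fun h => ⟨?_, h⟩⟩
    simpa [S, h] using hi
  rw [hfiber, card_pair (by simpa [eq_comm] using ha0)]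

end Sym2

section Length

variable {n : ℕ}

theorem zLenSym_mk (i j : ZMod n) : zLenSym s(i, j) = min (i - j).val (j - i).val := rfl

variable [NeZero n]

theorem zLenSym_mk_add_natCast (u : ZMod n) {k : ℕ} (hk : 2 * k ≤ n) :
    zLenSym s(u, u + (k : ZMod n)) = k := by
  have hkn : k < n := by have := NeZero.pos n; omega
  rw [zLenSym_mk, sub_add_cancel_left, add_sub_cancel_left, ZMod.neg_val,
    ZMod.val_natCast_of_lt hkn]
  split_ifs with h
  · have := ZMod.val_natCast_of_lt hkn
    simp only [h, ZMod.val_zero] at this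
    omega
  · omega

theorem zLenSym_eq_iff {k : ℕ} (hk : 2 * k ≤ n) {e : Sym2 (ZMod n)} :
    zLenSym e = k ↔ ∃ u, e = s(u, u + (k : ZMod n)) := by
  refine ⟨fun h => ?_, fun ⟨u, he⟩ => he ▸ zLenSym_mk_add_natCast u hk⟩
  induction e using Sym2.ind with
  | _ i j =>
    have eq_of_val {x : ZMod n} (hx : x.val = k) : x = k := by rw [← hx, ZMod.natCast_zmod_val]
    rw [zLenSym_mk] at h
    rcases min_choice (i - j).val (j - i).val with hmin | hmin <;> rw [hmin] at h
    · exact ⟨j, by rw [Sym2.eq_swap, ← eq_of_val h, add_sub_cancel]⟩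
    · exact ⟨i, by rw [← eq_of_val h, add_sub_cancel]⟩

theorem filter_zLenSym_eq (E : Finset (Sym2 (ZMod n))) {k : ℕ} (hk : 2 * k ≤ n) :
    E.filter (fun e => zLenSym e = k) =
      (univ.filter fun u : ZMod n => s(u, u + (k : ZMod n)) ∈ E).image
        fun u => s(u, u + (k : ZMod n)) := by
  ext e
  simp only [mem_filter, mem_image, mem_univ, true_and, zLenSym_eq_iff hk]
  constructor
  · rintro ⟨he, u, rfl⟩
    exact ⟨u, he, rfl⟩
  · rintro ⟨u, he, rfl⟩
    exact ⟨he, u, rfl⟩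

theorem card_filter_zLenSym_eq (E : Finset (Sym2 (ZMod n))) {k : ℕ} (hk0 : 0 < k)
    (hk : 2 * k < n) :
    #(E.filter fun e => zLenSym e = k) =
      #(univ.filter fun u : ZMod n => s(u, u + (k : ZMod n)) ∈ E) := by
  rw [filter_zLenSym_eq E hk.le, card_image_of_injective _ (Sym2.mk_add_injective ?_)]
  rw [← Nat.cast_add, ← two_mul, Ne, ZMod.natCast_eq_zero_iff]
  exact Nat.not_dvd_of_pos_of_lt (by omega) hk

theorem two_mul_card_filter_zLenSym_eq (E : Finset (Sym2 (ZMod n))) {k : ℕ} (hk0 : 0 < k)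
    (hn : n = 2 * k) :
    2 * #(E.filter fun e => zLenSym e = k) =
      #(univ.filter fun u : ZMod n => s(u, u + (k : ZMod n)) ∈ E) := by
  rw [filter_zLenSym_eq E hn.ge]
  refine Sym2.two_mul_card_image_mk_add E ?_ ?_
  · rw [← Nat.cast_add, ← two_mul, ← hn, ZMod.natCast_self]
  · rw [Ne, ZMod.natCast_eq_zero_iff]
    exact Nat.not_dvd_of_pos_of_lt hk0 (by omega)

end Length

section Ladder

variable {G : Type*} [AddCommGroup G] {E : Finset (Sym2 G)} {a d : G}

def HasDoubleRail (E : Finset (Sym2 G)) (a d u : G) (m : ℕ) : Prop :=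
  ∀ j, 0 < j → j < m →
    s(u + j • a, u + j • a + a) ∈ E ∧ s(u + j • a + d, u + j • a + d + a) ∈ E

variable
    (hA : ∀ u, ¬(s(u + d, u) ∈ E ∧ s(u, u + a) ∈ E ∧ s(u + a, u + a + d) ∈ E))
    (hB1 : ∀ u, ¬(s(u + a, u) ∈ E ∧ s(u, u + d) ∈ E ∧ s(u + d, u + a + d) ∈ E))
    (hB2 : ∀ u, ¬(s(u, u + a) ∈ E ∧ s(u + a, u + a + d) ∈ E ∧ s(u + a + d, u + d) ∈ E))
include hB1 in
theorem not_rail_add_of_rail_of_rung {u : G} (hrail : s(u, u + a) ∈ E) (hrung : s(u, u + d) ∈ E) :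
    s(u + d, u + d + a) ∉ E := fun h =>
  hB1 u ⟨Sym2.eq_swap ▸ hrail, hrung, add_right_comm u d a ▸ h⟩

include hB1 in
theorem eq_of_hasDoubleRail (hd : d + d = 0) {u₁ u₂ δ : G} {m j : ℕ}
    (h₁ : s(u₁, u₁ + a) ∈ E ∧ s(u₁, u₁ + d) ∈ E) (h₂ : s(u₂, u₂ + a) ∈ E ∧ s(u₂, u₂ + d) ∈ E)
    (hrail : HasDoubleRail E a d u₁ m) (hjm : j < m) (hδ : δ = 0 ∨ δ = d)
    (hu : u₂ = u₁ + j • a + δ) : u₁ = u₂ := by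
  rcases Nat.eq_zero_or_pos j with rfl | hj
  · rcases hδ with rfl | rfl
    · simp [hu]
    · simp only [zero_smul, add_zero] at hu
      exact absurd (hu ▸ h₂.1) (not_rail_add_of_rail_of_rung hB1 h₁.1 h₁.2)
  · refine absurd ?_ (not_rail_add_of_rail_of_rung hB1 h₂.1 h₂.2)
    obtain ⟨hj₁, hj₂⟩ := hrail j hj hjm
    rcases hδ with rfl | rfl
    · simpa [hu] using hj₂
    · simpa [hu, add_assoc, hd] using hj₁

include hA hB2 in
theorem not_rung_of_hasDoubleRail {u : G} {m : ℕ} (hm : 0 < m)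
    (h : s(u, u + a) ∈ E ∧ s(u, u + d) ∈ E) (hrail : HasDoubleRail E a d u m) :
    s(u + m • a, u + m • a + d) ∉ E := by
  intro hrung
  obtain ⟨j, rfl⟩ : ∃ j, m = j + 1 := ⟨m - 1, by omega⟩
  rcases Nat.eq_zero_or_pos j with rfl | hj
  · exact hA u ⟨Sym2.eq_swap ▸ h.2, h.1, by simpa using hrung⟩
  · obtain ⟨hj₁, hj₂⟩ := hrail j hj (by omega)
    rw [succ_nsmul, ← add_assoc] at hrung
    exact hB2 (u + j • a) ⟨hj₁, hrung, by rwa [Sym2.eq_swap, add_right_comm _ a d]⟩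

include hA hB1 hB2 in
theorem exists_escape (hd : d + d = 0) (hk : ∃ k, 0 < k ∧ k • a = d) {u : G}
    (h : s(u, u + a) ∈ E ∧ s(u, u + d) ∈ E) :
    ∃ (m : ℕ) (δ : G), 0 < m ∧ (δ = 0 ∨ δ = d) ∧ HasDoubleRail E a d u m ∧
      s(u + m • a + δ, u + m • a + δ + a) ∉ E ∧ s(u + m • a + δ, u + m • a + δ + d) ∉ E := by
  classical
  obtain ⟨k, hk, hka⟩ := hk
  have hbreak : ∃ m, 0 < m ∧
      ¬(s(u + m • a, u + m • a + a) ∈ E ∧ s(u + m • a + d, u + m • a + d + a) ∈ E) :=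
    ⟨k, hk, fun h' => not_rail_add_of_rail_of_rung hB1 h.1 h.2 (hka ▸ h'.1)⟩
  obtain ⟨hm, hmbreak⟩ := Nat.find_spec hbreak
  have hrail : HasDoubleRail E a d u (Nat.find hbreak) := fun j hj hjm => by
    simpa [hj] using Nat.find_min hbreak hjm
  have hrung := not_rung_of_hasDoubleRail hA hB2 hm h hrail
  by_cases hx : s(u + Nat.find hbreak • a, u + Nat.find hbreak • a + a) ∈ E
  · refine ⟨_, d, hm, Or.inr rfl, hrail, fun h' => hmbreak ⟨hx, h'⟩, ?_⟩
    rwa [add_assoc _ d d, hd, add_zero, Sym2.eq_swap]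
  · exact ⟨_, 0, hm, Or.inl rfl, hrail, by simpa using hx, by simpa using hrung⟩

include hA hB1 hB2 in
theorem card_rail_add_card_rung_le [Fintype G] [DecidableEq G] (hd : d + d = 0)
    (hk : ∃ k, 0 < k ∧ k • a = d) :
    #(univ.filter fun u => s(u, u + a) ∈ E) + #(univ.filter fun u => s(u, u + d) ∈ E) ≤
      Fintype.card G := by
  refine card_add_card_le_card_of_card_inter_le ?_
  have hesc := fun u (hu : u ∈ (univ.filter fun u => s(u, u + a) ∈ E) ∩
      univ.filter fun u => s(u, u + d) ∈ E) =>
    exists_escape hA hB1 hB2 hd hk (by simpa using hu)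
  choose! m δ hm hδ hrail hx₁ hx₂ using hesc
  refine card_le_card_of_injOn (fun u => u + m u • a + δ u)
    (fun u hu => by simpa using ⟨hx₁ u hu, hx₂ u hu⟩) ?_
  intro u₁ hu₁ u₂ hu₂ heq
  wlog hle : m u₂ ≤ m u₁ generalizing u₁ u₂
  · exact (this hu₂ hu₁ heq.symm (by omega)).symm
  have hδ₁₂ : δ u₁ - δ u₂ = 0 ∨ δ u₁ - δ u₂ = d := by
    have hneg : -d = d := neg_eq_of_add_eq_zero_left hd
    rcases hδ u₁ hu₁ with h₁ | h₁ <;> rcases hδ u₂ hu₂ with h₂ | h₂ <;> simp [h₁, h₂, hneg]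
  refine eq_of_hasDoubleRail hB1 hd (by simpa using hu₁) (by simpa using hu₂) (hrail u₁ hu₁)
    (j := m u₁ - m u₂) (by have := hm u₂ hu₂; omega) hδ₁₂ ?_
  have heq' : u₁ + m u₁ • a + δ u₁ = u₂ + m u₂ • a + δ u₂ := heq
  rw [sub_nsmul _ hle, ← sub_eq_zero, ← neg_eq_zero, ← sub_eq_zero.mpr heq']
  abel

end Ladder

theorem no_bad_structures_implies_bound_general (n : ℕ) (hn : 8 ≤ n) (h4 : 4 ∣ n)
    (v : ZMod n) (w : (⊤ : SimpleGraph (ZMod n)).Walk v v)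
    (hA : ∀ u : ZMod n,
      ¬(s(u + ((n / 2 : ℕ) : ZMod n), u) ∈ w.edges ∧ s(u, u + 1) ∈ w.edges ∧
        s(u + 1, u + 1 + ((n / 2 : ℕ) : ZMod n)) ∈ w.edges))
    (hB1 : ∀ u : ZMod n,
      ¬(s(u + 1, u) ∈ w.edges ∧ s(u, u + ((n / 2 : ℕ) : ZMod n)) ∈ w.edges ∧
        s(u + ((n / 2 : ℕ) : ZMod n), u + 1 + ((n / 2 : ℕ) : ZMod n)) ∈ w.edges))
    (hB2 : ∀ u : ZMod n,
      ¬(s(u, u + 1) ∈ w.edges ∧ s(u + 1, u + 1 + ((n / 2 : ℕ) : ZMod n)) ∈ w.edges ∧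
        s(u + 1 + ((n / 2 : ℕ) : ZMod n), u + ((n / 2 : ℕ) : ZMod n)) ∈ w.edges)) :
    (w.edges.toFinset.filter (fun e => zLenSym e = 1)).card
      + 2 * (w.edges.toFinset.filter (fun e => zLenSym e = n / 2)).card ≤ n := by
  have : NeZero n := ⟨by omega⟩
  have hn2 : n = 2 * (n / 2) := by omega
  have hd : ((n / 2 : ℕ) : ZMod n) + ((n / 2 : ℕ) : ZMod n) = 0 := by
    rw [← Nat.cast_add, ← two_mul, ← hn2, ZMod.natCast_self]
  simp only [← List.mem_toFinset] at hA hB1 hB2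
  rw [card_filter_zLenSym_eq _ one_pos (by omega),
    two_mul_card_filter_zLenSym_eq _ (by omega) hn2, Nat.cast_one]
  simpa using card_rail_add_card_rung_le hA hB1 hB2 hd ⟨n / 2, by omega, nsmul_one _⟩

/-- If a Hamiltonian cycle on `ZMod n` (`n ≥ 8`, `4 ∣ n`, `d = n/2`) contains none of
the configurations Type A, B1, B2 at any vertex `u`, then `t_1 + 2·t_d ≤ n`. -/
theorem no_bad_structures_implies_bound (n : ℕ) (hn : 8 ≤ n) (h4 : 4 ∣ n)
    (v : ZMod n) (w : (⊤ : SimpleGraph (ZMod n)).Walk v v)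
    (hw : w.IsHamiltonianCycle)
    (hA : ∀ u : ZMod n,
      ¬(s(u + ((n / 2 : ℕ) : ZMod n), u) ∈ w.edges ∧ s(u, u + 1) ∈ w.edges ∧
        s(u + 1, u + 1 + ((n / 2 : ℕ) : ZMod n)) ∈ w.edges))
    (hB1 : ∀ u : ZMod n,
      ¬(s(u + 1, u) ∈ w.edges ∧ s(u, u + ((n / 2 : ℕ) : ZMod n)) ∈ w.edges ∧
        s(u + ((n / 2 : ℕ) : ZMod n), u + 1 + ((n / 2 : ℕ) : ZMod n)) ∈ w.edges))
    (hB2 : ∀ u : ZMod n,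
      ¬(s(u, u + 1) ∈ w.edges ∧ s(u + 1, u + 1 + ((n / 2 : ℕ) : ZMod n)) ∈ w.edges ∧
        s(u + 1 + ((n / 2 : ℕ) : ZMod n), u + ((n / 2 : ℕ) : ZMod n)) ∈ w.edges)) :
    (w.edges.toFinset.filter (fun e => zLenSym e = 1)).card
      + 2 * (w.edges.toFinset.filter (fun e => zLenSym e = n / 2)).card ≤ n :=
  no_bad_structures_implies_bound_general n hn h4 v w hA hB1 hB2
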